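/- Let A be a ring and I a two-sided idempotent ideal of A. Then the following are equivalent: (1) ann_M(I) is a direct summand of M for every right A-module M, and I is finitely generated as a left ideal of A; (2) there exists an idempotent e ∈ A with I = Ae such that, setting B := (1−e)A(1−e) (a ring with identity 1−e) and regarding M := (1−e)Ae as a left B-module via multiplication in A, the character module Hom_ℤ((1−e)Ae, ℚ/ℤ) is hereditary Π-projective as a right B-module. -/

import Mathlib

/-!
Write `B = (1-e)A(1-e)`, `C = (1-e)Ae` and `E = eAe`. Testing the summand property on `A ⧸ xI`
shows that every `x ∈ I = I²` lies in `xI`; with finite generation this yields a common right unit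
`e ∈ I`, so `I = Ae` with `e` idempotent. As `Ae` is also a right ideal, `eA(1-e) = 0`, and `A` is
the triangular ring `[[B, C], [0, E]]`.

For a right `A`-module `M`, `ann_M(I)` lies in the `B`-module `M(1-e)` and is the kernel of
`M(1-e) → ∏_{χ ∈ M⁺} C⁺`, `m ↦ (t ↦ χ(m t))`. If the image is projective, this kernel has a
complement in `M(1-e)`, which extends to a complement of `ann_M(I)` in `M`. Conversely, for
`N ⊆ (C⁺)^ι`, glue a free `B`-module `F ↠ N` to `(E⁺)^ι` along `(x, t) ↦ (z ↦ π x (t z))`: in the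
resulting `A`-module the annihilator of `I` is `ker(F → N)`, so a complement of it splits `F ↠ N`.
-/

open MulOpposite

section Corner

variable (A : Type) [Ring A]

/-- The corner ring `fAf = {x : A | f·x·f = x}` attached to an idempotent `f` of `A`;
it is a ring with identity `f`. -/
def CornerRing (f : A) (_hf : f * f = f) : Type := {x : A // f * x * f = x}

variable {A}

lemma absorb_left {f x : A} (hf : f * f = f) (h : f * x * f = x) : f * x = x := by
  conv_lhs => rw [← h]
  rw [← mul_assoc, ← mul_assoc, hf, h]

lemma absorb_right {f x : A} (hf : f * f = f) (h : f * x * f = x) : x * f = x := by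
  conv_lhs => rw [← h]
  rw [mul_assoc, mul_assoc, hf, ← mul_assoc, h]

namespace CornerRing

variable {f : A} {hf : f * f = f}

instance : Add (CornerRing A f hf) := ⟨fun x y => ⟨x.1 + y.1, by rw [mul_add, add_mul, x.2, y.2]⟩⟩
instance : Zero (CornerRing A f hf) := ⟨⟨0, by rw [mul_zero, zero_mul]⟩⟩
instance : Neg (CornerRing A f hf) := ⟨fun x => ⟨-x.1, by rw [mul_neg, neg_mul, x.2]⟩⟩
instance : Mul (CornerRing A f hf) :=
  ⟨fun x y => ⟨x.1 * y.1, by rw [← mul_assoc, absorb_left hf x.2, mul_assoc,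
    absorb_right hf y.2]⟩⟩
instance : One (CornerRing A f hf) := ⟨⟨f, by rw [hf, hf]⟩⟩

instance instRing : Ring (CornerRing A f hf) where
  nsmul := nsmulRec
  zsmul := zsmulRec
  add_assoc x y z := Subtype.ext (add_assoc x.1 y.1 z.1)
  zero_add x := Subtype.ext (zero_add x.1)
  add_zero x := Subtype.ext (add_zero x.1)
  add_comm x y := Subtype.ext (add_comm x.1 y.1)
  neg_add_cancel x := Subtype.ext (neg_add_cancel x.1)
  mul_assoc x y z := Subtype.ext (mul_assoc x.1 y.1 z.1)
  one_mul x := Subtype.ext (absorb_left hf x.2)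
  mul_one x := Subtype.ext (absorb_right hf x.2)
  left_distrib x y z := Subtype.ext (mul_add x.1 y.1 z.1)
  right_distrib x y z := Subtype.ext (add_mul x.1 y.1 z.1)
  zero_mul x := Subtype.ext (zero_mul x.1)
  mul_zero x := Subtype.ext (mul_zero x.1)

end CornerRing

lemma one_sub_idem {e : A} (he : e * e = e) : (1 - e) * (1 - e) = 1 - e := by
  have h : (1 - e) * (1 - e) = 1 - e - e + e * e := by noncomm_ring
  rw [h, he]; abel

variable (A)

/-- `(1-e)Ae = {x : A | (1-e)·x·e = x}`, which is a left module over the corner ring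
`(1-e)A(1-e)`. -/
def LTrap (e : A) (_he : e * e = e) : Type := {x : A // (1 - e) * x * e = x}

variable {A}

namespace LTrap

variable {e : A} {he : e * e = e}

lemma ltrap_left {x : A} (h : (1 - e) * x * e = x) (he : e * e = e) : (1 - e) * x = x := by
  conv_lhs => rw [← h]
  rw [← mul_assoc, ← mul_assoc, one_sub_idem he, h]

lemma ltrap_right {x : A} (h : (1 - e) * x * e = x) (he : e * e = e) : x * e = x := by
  conv_lhs => rw [← h]
  rw [mul_assoc, mul_assoc, he, ← mul_assoc, h]

instance : Add (LTrap A e he) := ⟨fun x y => ⟨x.1 + y.1, by rw [mul_add, add_mul, x.2, y.2]⟩⟩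
instance : Zero (LTrap A e he) := ⟨⟨0, by rw [mul_zero, zero_mul]⟩⟩
instance : Neg (LTrap A e he) := ⟨fun x => ⟨-x.1, by rw [mul_neg, neg_mul, x.2]⟩⟩

instance instAddCommGroup : AddCommGroup (LTrap A e he) where
  nsmul := nsmulRec
  zsmul := zsmulRec
  add_assoc x y z := Subtype.ext (add_assoc x.1 y.1 z.1)
  zero_add x := Subtype.ext (zero_add x.1)
  add_zero x := Subtype.ext (add_zero x.1)
  add_comm x y := Subtype.ext (add_comm x.1 y.1)
  neg_add_cancel x := Subtype.ext (neg_add_cancel x.1)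

instance instSMul : SMul (CornerRing A (1 - e) (one_sub_idem he)) (LTrap A e he) :=
  ⟨fun c x => ⟨c.1 * x.1, by
    rw [← mul_assoc, absorb_left (one_sub_idem he) c.2, mul_assoc, ltrap_right x.2 he]⟩⟩

instance instMulAction : MulAction (CornerRing A (1 - e) (one_sub_idem he)) (LTrap A e he) where
  one_smul x := Subtype.ext (ltrap_left x.2 he)
  mul_smul c d x := Subtype.ext (mul_assoc c.1 d.1 x.1)

instance instDistribMulAction :
    DistribMulAction (CornerRing A (1 - e) (one_sub_idem he)) (LTrap A e he) where
  smul_zero c := Subtype.ext (mul_zero c.1)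
  smul_add c x y := Subtype.ext (mul_add c.1 x.1 y.1)

instance instModule : Module (CornerRing A (1 - e) (one_sub_idem he)) (LTrap A e he) where
  add_smul c d x := Subtype.ext (add_mul c.1 d.1 x.1)
  zero_smul x := Subtype.ext (zero_mul x.1)

end LTrap

end Corner

section CharMod

variable (B : Type) [Ring B] (M : Type) [AddCommGroup M] [Module B M]

/-- The right `B`-module structure `(f·b)(m) = f(b·m)` on the character module
`M⁺ = Hom_ℤ(M, ℚ/ℤ)` of a left `B`-module `M`. -/
instance charSMul : SMul Bᵐᵒᵖ (CharacterModule M) :=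
  ⟨fun b f => f.comp (DistribMulAction.toAddMonoidHom M b.unop)⟩

instance charMulAction : MulAction Bᵐᵒᵖ (CharacterModule M) where
  one_smul f := DFunLike.ext _ _ fun m => by
    show f ((1 : Bᵐᵒᵖ).unop • m) = f m
    rw [unop_one, one_smul]
  mul_smul b b' f := DFunLike.ext _ _ fun m => by
    show f ((b * b').unop • m) = f (b'.unop • b.unop • m)
    rw [unop_mul, mul_smul]

instance charDistribMulAction : DistribMulAction Bᵐᵒᵖ (CharacterModule M) where
  smul_zero _ := DFunLike.ext _ _ fun _ => rfl
  smul_add _ _ _ := DFunLike.ext _ _ fun _ => rfl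

instance charModule : Module Bᵐᵒᵖ (CharacterModule M) where
  add_smul b b' f := DFunLike.ext _ _ fun m => by
    show f ((b + b').unop • m) = f (b.unop • m) + f (b'.unop • m)
    rw [unop_add, add_smul, map_add]
  zero_smul f := DFunLike.ext _ _ fun m => by
    show f ((0 : Bᵐᵒᵖ).unop • m) = 0
    rw [unop_zero, zero_smul, map_zero]

end CharMod

variable (A : Type) [Ring A]

/-- `ann_M(I) = {m ∈ M | m·a = 0 for all a ∈ I}` as a submodule of the right `A`-module `M`. -/
def rAnn (I : Ideal A) (M : Type) [AddCommGroup M] [Module Aᵐᵒᵖ M] :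
    Submodule Aᵐᵒᵖ M where
  carrier := {m : M | ∀ a ∈ I, op a • m = 0}
  add_mem' := by
    intro x y hx hy a ha
    rw [smul_add, hx a ha, hy a ha, add_zero]
  zero_mem' := by
    intro a _
    rw [smul_zero]
  smul_mem' := by
    intro c m hm a ha
    rw [smul_smul]
    have h1 : op a * c = op (c.unop * a) := by
      rw [op_mul, op_unop]
    rw [h1]
    exact hm (c.unop * a) (I.mul_mem_left c.unop ha)

namespace CharacterModule

variable {G : Type} [AddCommGroup G]

@[simp] lemma add_apply (χ χ' : CharacterModule G) (g : G) : (χ + χ') g = χ g + χ' g := rfl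

@[simp] lemma zero_apply (g : G) : (0 : CharacterModule G) g = 0 := rfl

end CharacterModule

lemma mem_rAnn_iff_of_coe_eq {A : Type} [Ring A] {I : Ideal A} {e : A}
    (hI : (I : Set A) = {x : A | ∃ a : A, x = a * e}) {M : Type} [AddCommGroup M]
    [Module Aᵐᵒᵖ M] {m : M} : m ∈ rAnn A I M ↔ ∀ a : A, op (a * e) • m = 0 := by
  refine ⟨fun h a => h _ (hI ▸ ⟨a, rfl⟩ : a * e ∈ (I : Set A)), fun h x hx => ?_⟩
  obtain ⟨a, rfl⟩ : x ∈ {x : A | ∃ a : A, x = a * e} := hI ▸ hx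
  exact h a

section Projective

variable {R E F : Type*} [Ring R] [AddCommGroup E] [Module R E] [AddCommGroup F] [Module R F]

theorem Module.Projective.of_isCompl_ker [Module.Projective R E] {π : E →ₗ[R] F}
    (hπ : Function.Surjective π) {K : Submodule R E} (h : IsCompl (LinearMap.ker π) K) :
    Module.Projective R F :=
  have : Module.Projective R K := .of_split K.subtype (K.projectionOnto _ h.symm)
    (LinearMap.ext fun k => Submodule.projectionOnto_apply_left _ k)
  .of_equiv' ((Submodule.quotientEquivOfIsCompl _ K h).symm.trans (π.quotKerEquivOfSurjective hπ))

theorem LinearMap.exists_isCompl_ker_of_projective_range (φ : E →ₗ[R] F)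
    [Module.Projective R (LinearMap.range φ)] : ∃ K, IsCompl (LinearMap.ker φ) K := by
  obtain ⟨s, hs⟩ := φ.rangeRestrict.exists_rightInverse_of_surjective φ.range_rangeRestrict
  have hP : IsIdempotentElem (s ∘ₗ φ.rangeRestrict) := by
    rw [IsIdempotentElem, Module.End.mul_eq_comp, LinearMap.comp_assoc, ← LinearMap.comp_assoc _ s,
      hs, LinearMap.id_comp]
  have hker : LinearMap.ker (s ∘ₗ φ.rangeRestrict) = LinearMap.ker φ := by
    rw [LinearMap.ker_comp_of_ker_eq_bot _ (LinearMap.ker_eq_bot_of_inverse hs),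
      LinearMap.ker_rangeRestrict]
  exact ⟨_, hker ▸ (LinearMap.IsIdempotentElem.isCompl hP).symm⟩

end Projective

section IdempotentIdeal

variable {A : Type} [Ring A] {I : Ideal A} {M : Type} [AddCommGroup M] [Module Aᵐᵒᵖ M]
  {N' : Submodule Aᵐᵒᵖ M}

lemma smul_mem_of_isCompl_rAnn (hN' : IsCompl (rAnn A I M) N') (m : M) {a : A} (ha : a ∈ I) :
    op a • m ∈ N' := by
  obtain ⟨u, hu, v, hv, rfl⟩ := Submodule.mem_sup.1 (hN'.sup_eq_top ▸ Submodule.mem_top (x := m))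
  rw [smul_add, hu a ha, zero_add]
  exact N'.smul_mem _ hv

lemma smul_mem_of_isCompl_rAnn_of_mem_closure (hN' : IsCompl (rAnn A I M) N') (m : M) {x : A}
    (hx : x ∈ AddSubgroup.closure {x : A | ∃ b ∈ I, ∃ c ∈ I, x = b * c}) : op x • m ∈ N' := by
  induction hx using AddSubgroup.closure_induction with
  | mem _ h =>
    obtain ⟨b, -, c, hc, rfl⟩ := h
    rw [op_mul, mul_smul]
    exact smul_mem_of_isCompl_rAnn hN' _ hc
  | zero => rw [op_zero, zero_smul]; exact N'.zero_mem
  | add _ _ _ _ h₁ h₂ => rw [op_add, add_smul]; exact N'.add_mem h₁ h₂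
  | neg _ _ h => rw [op_neg, neg_smul]; exact N'.neg_mem h

/-- Test the summand property on `A ⧸ xI`: the class of `x` lies in `ann(I)` and, as `x ∈ I²`,
also in the complement. -/
lemma exists_mul_eq_self_of_isCompl_rAnn (hright : ∀ a ∈ I, ∀ b : A, a * b ∈ I)
    (hidem : ∀ a ∈ I, a ∈ AddSubgroup.closure {x : A | ∃ b ∈ I, ∃ c ∈ I, x = b * c})
    (hsum : ∀ (M : Type) [AddCommGroup M] [Module Aᵐᵒᵖ M], ∃ N' : Submodule Aᵐᵒᵖ M,
      IsCompl (rAnn A I M) N')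
    {x : A} (hx : x ∈ I) : ∃ s ∈ I, x * s = x := by
  let J : Submodule Aᵐᵒᵖ A :=
    { carrier := {y | ∃ s ∈ I, x * s = y}
      add_mem' := by
        rintro _ _ ⟨s, hs, rfl⟩ ⟨s', hs', rfl⟩
        exact ⟨s + s', I.add_mem hs hs', mul_add x s s'⟩
      zero_mem' := ⟨0, I.zero_mem, mul_zero x⟩
      smul_mem' := by
        rintro c _ ⟨s, hs, rfl⟩
        exact ⟨s * c.unop, hright s hs c.unop, (mul_assoc x s c.unop).symm⟩ }
  obtain ⟨N', hN'⟩ := hsum (A ⧸ J)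
  have hmk : ∀ y : A, J.mkQ y = op y • J.mkQ 1 := fun y => by
    rw [← map_smul, op_smul_eq_mul, one_mul]
  have hann : J.mkQ x ∈ rAnn A I (A ⧸ J) := fun a ha => by
    rw [hmk x, ← mul_smul, ← op_mul, ← hmk, Submodule.mkQ_apply,
      Submodule.Quotient.mk_eq_zero]
    exact ⟨a, ha, rfl⟩
  have hcompl : J.mkQ x ∈ N' := hmk x ▸ smul_mem_of_isCompl_rAnn_of_mem_closure hN' _ (hidem x hx)
  have h0 := hN'.disjoint.le_bot ⟨hann, hcompl⟩
  rwa [Submodule.mem_bot, Submodule.mkQ_apply, Submodule.Quotient.mk_eq_zero] at h0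

lemma exists_idempotent_eq_mul_of_fg (hunit : ∀ x ∈ I, ∃ s ∈ I, x * s = x) (hfg : I.FG) :
    ∃ e : A, e * e = e ∧ (I : Set A) = {x : A | ∃ a : A, x = a * e} := by
  classical
  have hfin : ∀ S : Finset A, (S : Set A) ⊆ I → ∃ u ∈ I, ∀ y ∈ S, y * u = y := by
    intro S
    induction S using Finset.induction_on with
    | empty => exact fun _ => ⟨0, I.zero_mem, by simp⟩
    | insert x S _ ih =>
      intro hS
      rw [Finset.coe_insert, Set.insert_subset_iff] at hS
      obtain ⟨u, hu, hSu⟩ := ih hS.2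
      obtain ⟨f, hf, hxf⟩ := hunit (x - x * u) (I.sub_mem hS.1 (I.mul_mem_left x hu))
      refine ⟨u + f - u * f, I.sub_mem (I.add_mem hu hf) (I.mul_mem_left u hf), ?_⟩
      have key : ∀ y, y * (u + f - u * f) = y * u + (y - y * u) * f := fun y => by noncomm_ring
      intro y hy
      rcases Finset.mem_insert.1 hy with rfl | hy
      · rw [key, hxf, add_sub_cancel]
      · rw [key, hSu y hy, sub_self, zero_mul, add_zero]
  obtain ⟨S, rfl⟩ := hfg
  obtain ⟨e, he, hSe⟩ := hfin S Submodule.subset_span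
  have hall : ∀ x ∈ Ideal.span (S : Set A), x * e = x := fun x hx => by
    induction hx using Submodule.span_induction with
    | mem y hy => exact hSe y hy
    | zero => rw [zero_mul]
    | add y z _ _ hy hz => rw [add_mul, hy, hz]
    | smul a y _ hy => rw [smul_eq_mul, mul_assoc, hy]
  refine ⟨e, hall e he, Set.ext fun x => ⟨fun hx => ⟨x, (hall x hx).symm⟩, ?_⟩⟩
  rintro ⟨a, rfl⟩
  exact Ideal.mul_mem_left _ a he

end IdempotentIdeal

section Peirce

variable {A : Type} [Ring A]

lemma mul_mul_mul_of_idem {f g : A} (hf : f * f = f) (hg : g * g = g) (a : A) :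
    f * (f * a * g) * g = f * a * g := by
  rw [← mul_assoc, ← mul_assoc, hf, mul_assoc _ g g, hg]

def CornerRing.compressHom (f : A) (hf : f * f = f)
    (h : ∀ a b : A, f * a * (1 - f) * b * f = 0) : A →+* CornerRing A f hf where
  toFun a := ⟨f * a * f, mul_mul_mul_of_idem hf hf a⟩
  map_one' := Subtype.ext <| show f * 1 * f = f by rw [mul_one, hf]
  map_mul' a b := Subtype.ext <| show f * (a * b) * f = f * a * f * (f * b * f) by
    calc f * (a * b) * f = f * a * f * b * f + f * a * (1 - f) * b * f := by noncomm_ring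
      _ = f * a * (f * f) * b * f := by rw [h, add_zero, hf]
      _ = f * a * f * (f * b * f) := by noncomm_ring
  map_zero' := Subtype.ext <| show f * 0 * f = 0 by rw [mul_zero, zero_mul]
  map_add' a b := Subtype.ext <| show f * (a + b) * f = f * a * f + f * b * f by noncomm_ring

namespace LTrap

variable {e : A} (he : e * e = e)

def compress : A →+ LTrap A e he where
  toFun a := ⟨(1 - e) * a * e, mul_mul_mul_of_idem (one_sub_idem he) he a⟩
  map_zero' := Subtype.ext <| show (1 - e) * 0 * e = 0 by rw [mul_zero, zero_mul]
  map_add' a b := Subtype.ext <| show (1 - e) * (a + b) * e = (1 - e) * a * e + (1 - e) * b * e by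
    noncomm_ring

variable {he}

lemma compress_coe (t : LTrap A e he) : compress he t.1 = t := Subtype.ext t.2

lemma compress_one : compress he 1 = 0 :=
  Subtype.ext <| show (1 - e) * 1 * e = 0 by rw [mul_one, IsIdempotentElem.one_sub_mul_self he]

lemma compress_self : compress he e = 0 :=
  Subtype.ext <| show (1 - e) * e * e = 0 by rw [IsIdempotentElem.one_sub_mul_self he, zero_mul]

lemma compress_eq_zero_of_mem_cornerRing (c : CornerRing A (1 - e) (one_sub_idem he)) :
    compress he c.1 = 0 := Subtype.ext <| show (1 - e) * c.1 * e = 0 by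
  rw [← absorb_right (one_sub_idem he) c.2, mul_assoc, mul_assoc,
    IsIdempotentElem.one_sub_mul_self he, mul_zero, mul_zero]

def mulCorner (t : LTrap A e he) : CornerRing A e he →+ LTrap A e he where
  toFun z := ⟨t.1 * z.1, by rw [← mul_assoc, ltrap_left t.2 he, mul_assoc, absorb_right he z.2]⟩
  map_zero' := Subtype.ext (mul_zero t.1)
  map_add' z z' := Subtype.ext (mul_add t.1 z.1 z'.1)

lemma mulCorner_one (t : LTrap A e he) : t.mulCorner 1 = t :=
  Subtype.ext (ltrap_right t.2 he)

lemma zero_mulCorner (z : CornerRing A e he) : (0 : LTrap A e he).mulCorner z = 0 :=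
  Subtype.ext (zero_mul z.1)

lemma add_mulCorner (t t' : LTrap A e he) (z : CornerRing A e he) :
    (t + t').mulCorner z = t.mulCorner z + t'.mulCorner z :=
  Subtype.ext (add_mul t.1 t'.1 z.1)

end LTrap

def CharacterModule.charAt {e : A} {he : e * e = e} (χ : CharacterModule (LTrap A e he))
    (t : LTrap A e he) : CharacterModule (CornerRing A e he) :=
  AddMonoidHom.comp χ t.mulCorner

section Triangular

variable {e : A} (he : e * e = e) (htri : ∀ a : A, e * a * e = e * a)

include htri in
lemma mul_mul_one_sub_eq_zero (a : A) : e * a * (1 - e) = 0 := by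
  rw [mul_sub, mul_one, htri, sub_self]

def compressOneSub : A →+* CornerRing A (1 - e) (one_sub_idem he) :=
  CornerRing.compressHom (1 - e) (one_sub_idem he) fun a b => by
    rw [sub_sub_cancel, mul_assoc, mul_assoc, ← mul_assoc e, mul_mul_one_sub_eq_zero htri, mul_zero]

def compressIdem : A →+* CornerRing A e he :=
  CornerRing.compressHom e he fun a b => by rw [mul_mul_one_sub_eq_zero htri, zero_mul, zero_mul]

lemma compressOneSub_coe (c : CornerRing A (1 - e) (one_sub_idem he)) :
    compressOneSub he htri c.1 = c := Subtype.ext c.2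

lemma compressOneSub_mul_self (a : A) : compressOneSub he htri (a * e) = 0 :=
  Subtype.ext <| show (1 - e) * (a * e) * (1 - e) = 0 by
    rw [mul_assoc, mul_assoc, IsIdempotentElem.mul_one_sub_self he, mul_zero, mul_zero]

lemma compressIdem_self : compressIdem he htri e = 1 :=
  Subtype.ext <| show e * e * e = e by rw [he, he]

/-- The `(1-e)Ae`-entry of the product of triangular matrices `b a`, multiplied by `z`. -/
lemma LTrap.mulCorner_compress_mul (a b : A) (z : CornerRing A e he) :
    (LTrap.compress he (b * a)).mulCorner z =
      (LTrap.compress he b).mulCorner (compressIdem he htri a * z) +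
        compressOneSub he htri b • (LTrap.compress he a).mulCorner z := Subtype.ext <| by
  show (1 - e) * (b * a) * e * z.1 =
    (1 - e) * b * e * (e * a * e * z.1) + (1 - e) * b * (1 - e) * ((1 - e) * a * e * z.1)
  calc (1 - e) * (b * a) * e * z.1
      = (1 - e) * b * (e * e) * a * e * z.1 + (1 - e) * b * ((1 - e) * (1 - e)) * a * e * z.1 := by
        rw [he, one_sub_idem he]; noncomm_ring
    _ = _ := by noncomm_ring

end Triangular

end Peirce

section CornerSubgroup

variable {A : Type} [Ring A] (M : Type) [AddCommGroup M] [Module Aᵐᵒᵖ M]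

def cornerSubgroup (f : A) : AddSubgroup M where
  carrier := {m | op f • m = m}
  zero_mem' := smul_zero _
  add_mem' hm hn := (smul_add _ _ _).trans (congrArg₂ _ hm hn)
  neg_mem' hm := (smul_neg _ _).trans (congrArg _ hm)

variable {M} {f : A} {hf : f * f = f}

def cornerSubgroup.actionHom :
    (CornerRing A f hf)ᵐᵒᵖ →+* AddMonoid.End (cornerSubgroup M f) where
  toFun b :=
    { toFun m := ⟨op b.unop.1 • m.1, show op f • _ = _ by
        rw [← mul_smul, ← op_mul, absorb_right hf b.unop.2]⟩
      map_zero' := Subtype.ext (smul_zero _)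
      map_add' m n := Subtype.ext (smul_add _ m.1 n.1) }
  map_one' := AddMonoidHom.ext fun m => Subtype.ext m.2
  map_mul' b c := AddMonoidHom.ext fun m => Subtype.ext <|
    show op (c.unop.1 * b.unop.1) • m.1 = op b.unop.1 • op c.unop.1 • m.1 by rw [op_mul, mul_smul]
  map_zero' := AddMonoidHom.ext fun m => Subtype.ext <|
    show op (0 : A) • m.1 = 0 by rw [op_zero, zero_smul]
  map_add' b c := AddMonoidHom.ext fun m => Subtype.ext <|
    show op (b.unop.1 + c.unop.1) • m.1 = op b.unop.1 • m.1 + op c.unop.1 • m.1 by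
      rw [op_add, add_smul]

instance : Module (CornerRing A f hf)ᵐᵒᵖ (cornerSubgroup M f) :=
  Module.compHom (cornerSubgroup M f) (cornerSubgroup.actionHom (M := M) (hf := hf))

end CornerSubgroup

section Summand

variable {A : Type} [Ring A] {e : A} (he : e * e = e) {M : Type} [AddCommGroup M] [Module Aᵐᵒᵖ M]

def cornerProj (htri : ∀ a : A, e * a * e = e * a) :
    M →ₛₗ[(compressOneSub he htri).op] cornerSubgroup M (1 - e) where
  toFun m := ⟨op (1 - e) • m, show op (1 - e) • op (1 - e) • m = op (1 - e) • m by
    rw [← mul_smul, ← op_mul, one_sub_idem he]⟩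
  map_add' m n := Subtype.ext (smul_add _ m n)
  map_smul' a m := Subtype.ext <|
    show op (1 - e) • a • m = op ((1 - e) * a.unop * (1 - e)) • op (1 - e) • m by
      rw [← op_unop a, ← mul_smul, ← mul_smul, ← op_mul, ← op_mul, unop_op]
      congr 2
      calc a.unop * (1 - e) = (1 - e) * a.unop * (1 - e) + e * a.unop * (1 - e) := by noncomm_ring
        _ = (1 - e) * ((1 - e) * a.unop * (1 - e)) := by
          rw [mul_mul_one_sub_eq_zero htri, add_zero, ← mul_assoc, ← mul_assoc, one_sub_idem he]

variable {he} in
lemma cornerProj_coe (htri : ∀ a : A, e * a * e = e * a) (m : cornerSubgroup M (1 - e)) :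
    cornerProj he htri m.1 = m := Subtype.ext m.2

def LTrap.smulHom (m : M) : LTrap A e he →+ M where
  toFun t := op t.1 • m
  map_zero' := show op (0 : A) • m = 0 by rw [op_zero, zero_smul]
  map_add' t t' := show op (t.1 + t'.1) • m = _ by rw [op_add, add_smul]

def toCharacters : cornerSubgroup M (1 - e) →ₗ[(CornerRing A (1 - e) (one_sub_idem he))ᵐᵒᵖ]
    (CharacterModule M → CharacterModule (LTrap A e he)) where
  toFun m χ := AddMonoidHom.comp χ (LTrap.smulHom he m.1)
  map_add' m n := funext fun χ => DFunLike.ext _ _ fun t =>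
    show χ (op t.1 • (m.1 + n.1)) = χ (op t.1 • m.1) + χ (op t.1 • n.1) by rw [smul_add, map_add]
  map_smul' b m := funext fun χ => DFunLike.ext _ _ fun t =>
    show χ (op t.1 • op b.unop.1 • m.1) = χ (op (b.unop.1 * t.1) • m.1) by rw [op_mul, mul_smul]

variable {he}

lemma toCharacters_apply (m : cornerSubgroup M (1 - e)) (χ : CharacterModule M)
    (t : LTrap A e he) : toCharacters he m χ t = χ (op t.1 • m.1) := rfl

lemma mem_ker_toCharacters_iff {I : Ideal A} (hI : (I : Set A) = {x : A | ∃ a : A, x = a * e})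
    (m : cornerSubgroup M (1 - e)) : m ∈ LinearMap.ker (toCharacters he) ↔ m.1 ∈ rAnn A I M := by
  have hker : m ∈ LinearMap.ker (toCharacters he) ↔ ∀ t : LTrap A e he, op t.1 • m.1 = 0 :=
    ⟨fun h t => CharacterModule.eq_zero_of_character_apply fun χ =>
        (toCharacters_apply m χ t).symm.trans (congrFun h χ ▸ rfl),
      fun h => funext fun χ => DFunLike.ext _ _ fun t => by
        rw [toCharacters_apply, h, map_zero]; rfl⟩
  rw [hker, mem_rAnn_iff_of_coe_eq hI]
  refine ⟨fun h a => ?_, fun h t => LTrap.ltrap_right t.2 he ▸ h t.1⟩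
  -- `m = m (1-e)`, and `(1-e) a e ∈ (1-e)Ae`
  rw [← m.2, ← mul_smul, ← op_mul, ← mul_assoc]
  exact h (LTrap.compress he a)

lemma exists_isCompl_rAnn_of_isCompl_ker (htri : ∀ a : A, e * a * e = e * a) {I : Ideal A}
    (hI : (I : Set A) = {x : A | ∃ a : A, x = a * e})
    {K : Submodule (CornerRing A (1 - e) (one_sub_idem he))ᵐᵒᵖ (cornerSubgroup M (1 - e))}
    (hK : IsCompl (LinearMap.ker (toCharacters he)) K) :
    ∃ N' : Submodule Aᵐᵒᵖ M, IsCompl (rAnn A I M) N' := by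
  have hproj : ∀ m ∈ rAnn A I M, (cornerProj he htri m).1 = m := fun m hm => by
    have hme : op e • m = 0 := by simpa using (mem_rAnn_iff_of_coe_eq hI).1 hm 1
    show op (1 - e) • m = m
    rw [op_sub, op_one, sub_smul, one_smul, hme, sub_zero]
  refine ⟨K.comap (cornerProj he htri), Submodule.disjoint_def.2 fun m hm hmK => ?_,
    Submodule.codisjoint_iff_exists_add_eq.2 fun m => ?_⟩
  · have hker : cornerProj he htri m ∈ LinearMap.ker (toCharacters he) :=
      (mem_ker_toCharacters_iff hI _).2 ((hproj m hm).symm ▸ hm)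
    rw [← hproj m hm, hK.disjoint.le_bot ⟨hker, hmK⟩]
    rfl
  · obtain ⟨k, k', hk, hk', hkk'⟩ :=
      Submodule.codisjoint_iff_exists_add_eq.1 hK.codisjoint (cornerProj he htri m)
    refine ⟨k.1, m - k.1, (mem_ker_toCharacters_iff hI k).1 hk, ?_, add_sub_cancel _ _⟩
    rw [Submodule.mem_comap, map_sub, cornerProj_coe, ← hkk', add_sub_cancel_left]
    exact hk'

end Summand

section Glue

variable {A : Type} [Ring A] {e : A} {he : e * e = e} {htri : ∀ a : A, e * a * e = e * a}
  {ι X : Type} [AddCommGroup X] [Module (CornerRing A (1 - e) (one_sub_idem he))ᵐᵒᵖ X]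
  {π : X →ₗ[(CornerRing A (1 - e) (one_sub_idem he))ᵐᵒᵖ] (ι → CharacterModule (LTrap A e he))}

/-- Since `eA(1-e) = 0`, `A` is the triangular ring `[[(1-e)A(1-e), (1-e)Ae], [0, eAe]]`; it acts
on row vectors `(x, y)` by matrix multiplication, where `x · t` for `t ∈ (1-e)Ae` is
`i ↦ (z ↦ π x i (t z))`. -/
def Glue (_htri : ∀ a : A, e * a * e = e * a)
    (_π : X →ₗ[(CornerRing A (1 - e) (one_sub_idem he))ᵐᵒᵖ] (ι → CharacterModule (LTrap A e he))) :
    Type :=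
  X × (ι → CharacterModule (CornerRing A e he))

namespace Glue

instance : AddCommGroup (Glue htri π) :=
  inferInstanceAs (AddCommGroup (X × (ι → CharacterModule (CornerRing A e he))))

def action (a : A) : Glue htri π →+ Glue htri π :=
  AddMonoidHom.mk' (fun m => (op (compressOneSub he htri a) • m.1, fun i =>
      op (compressIdem he htri a) • m.2 i +
        (π m.1 i).charAt (LTrap.compress he a)))
    fun m n => by
      refine Prod.ext (smul_add _ _ _) (funext fun i => DFunLike.ext _ _ fun z => ?_)
      show (m.2 i + n.2 i) _ + (π (m.1 + n.1) i) _ = (m.2 i _ + π m.1 i _) + (n.2 i _ + π n.1 i _)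
      rw [map_add, Pi.add_apply, CharacterModule.add_apply, CharacterModule.add_apply]
      abel

lemma action_fst (a : A) (m : Glue htri π) :
    (action a m).1 = op (compressOneSub he htri a) • m.1 := rfl

lemma action_snd_apply (a : A) (m : Glue htri π) (i : ι) (z : CornerRing A e he) :
    (action a m).2 i z =
      m.2 i (compressIdem he htri a * z) + π m.1 i ((LTrap.compress he a).mulCorner z) := rfl

@[ext] lemma ext {m n : Glue htri π} (h₁ : m.1 = n.1) (h₂ : ∀ i z, m.2 i z = n.2 i z) : m = n :=
  Prod.ext h₁ (funext fun i => DFunLike.ext _ _ (h₂ i))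

lemma action_one (m : Glue htri π) : action 1 m = m := by
  ext i z
  · rw [action_fst, map_one, op_one, one_smul]
  · rw [action_snd_apply, map_one, one_mul, LTrap.compress_one, LTrap.zero_mulCorner, map_zero,
      add_zero]

lemma action_mul (a b : A) (m : Glue htri π) : action (b * a) m = action a (action b m) := by
  ext i z
  · rw [action_fst, action_fst, action_fst, map_mul, op_mul, mul_smul]
  · rw [action_snd_apply, action_snd_apply, action_snd_apply, action_fst,
      map_mul (compressIdem he htri), mul_assoc, LTrap.mulCorner_compress_mul he htri, map_add,
      π.map_smul, add_assoc]
    rfl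

lemma action_zero (m : Glue htri π) : action 0 m = 0 := by
  ext i z
  · rw [action_fst, map_zero, op_zero, zero_smul]
    rfl
  · rw [action_snd_apply, map_zero, zero_mul, map_zero, map_zero, LTrap.zero_mulCorner, map_zero,
      add_zero]
    rfl

lemma action_add (a b : A) (m : Glue htri π) : action (a + b) m = action a m + action b m := by
  ext i z
  · rw [action_fst, map_add, op_add, add_smul]
    rfl
  · rw [action_snd_apply, map_add, add_mul, map_add, map_add, LTrap.add_mulCorner, map_add]
    show _ = (action a m).2 i z + (action b m).2 i z
    rw [action_snd_apply, action_snd_apply]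
    abel

def actionHom : Aᵐᵒᵖ →+* AddMonoid.End (Glue htri π) where
  toFun a := action a.unop
  map_one' := AddMonoidHom.ext action_one
  map_mul' a b := AddMonoidHom.ext (action_mul a.unop b.unop)
  map_zero' := AddMonoidHom.ext action_zero
  map_add' a b := AddMonoidHom.ext (action_add a.unop b.unop)

instance : Module Aᵐᵒᵖ (Glue htri π) :=
  Module.compHom (Glue htri π) (actionHom (htri := htri) (π := π))

@[simp] lemma smul_fst (a : A) (m : Glue htri π) :
    (op a • m).1 = op (compressOneSub he htri a) • m.1 := rfl

@[simp] lemma smul_snd_apply (a : A) (m : Glue htri π) (i : ι) (z : CornerRing A e he) :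
    (op a • m).2 i z = m.2 i (compressIdem he htri a * z) +
      π m.1 i ((LTrap.compress he a).mulCorner z) := rfl

@[simp] lemma zero_fst : (0 : Glue htri π).1 = 0 := rfl

@[simp] lemma zero_snd_apply (i : ι) (z : CornerRing A e he) : (0 : Glue htri π).2 i z = 0 := rfl

variable {I : Ideal A}

lemma mem_rAnn_iff (hI : (I : Set A) = {x : A | ∃ a : A, x = a * e}) (m : Glue htri π) :
    m ∈ rAnn A I (Glue htri π) ↔ π m.1 = 0 ∧ m.2 = 0 := by
  rw [mem_rAnn_iff_of_coe_eq hI]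
  constructor
  · intro h
    have h₂ : m.2 = 0 := funext fun i => DFunLike.ext _ _ fun z => by
      simpa [compressIdem_self, LTrap.compress_self, LTrap.zero_mulCorner] using
        congrArg (fun n : Glue htri π => n.2 i z) (h 1)
    refine ⟨funext fun i => DFunLike.ext _ _ fun t => ?_, h₂⟩
    have := congrArg (fun n : Glue htri π => n.2 i 1) (h t.1)
    simpa [LTrap.ltrap_right t.2 he, h₂, LTrap.compress_coe, LTrap.mulCorner_one] using this
  · rintro ⟨h₁, h₂⟩ a
    ext i z
    · rw [smul_fst, compressOneSub_mul_self, op_zero, zero_smul, zero_fst]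
    · rw [smul_snd_apply, h₁, h₂, Pi.zero_apply, Pi.zero_apply, CharacterModule.zero_apply,
        CharacterModule.zero_apply, add_zero, zero_snd_apply]

def inl (x : X) : Glue htri π := (x, 0)

lemma inl_add (x y : X) : (inl (x + y) : Glue htri π) = inl x + inl y :=
  Prod.ext rfl (add_zero 0).symm

lemma smul_inl (c : CornerRing A (1 - e) (one_sub_idem he)) (x : X) :
    op c.1 • (inl x : Glue htri π) = inl (op c • x) := by
  ext i z
  · rw [smul_fst, compressOneSub_coe]
    rfl
  · rw [smul_snd_apply, LTrap.compress_eq_zero_of_mem_cornerRing, LTrap.zero_mulCorner, map_zero]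
    exact zero_add 0

lemma exists_isCompl_ker (hI : (I : Set A) = {x : A | ∃ a : A, x = a * e})
    {N'' : Submodule Aᵐᵒᵖ (Glue htri π)} (h : IsCompl (rAnn A I (Glue htri π)) N'') :
    ∃ K, IsCompl (LinearMap.ker π) K := by
  let K : Submodule (CornerRing A (1 - e) (one_sub_idem he))ᵐᵒᵖ X :=
    { carrier := {x | inl x ∈ N''}
      add_mem' := fun hx hy => by rw [Set.mem_setOf_eq, inl_add]; exact N''.add_mem hx hy
      zero_mem' := N''.zero_mem
      smul_mem' := fun c x hx => by
        rw [Set.mem_setOf_eq, ← op_unop c, ← smul_inl]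
        exact N''.smul_mem _ hx }
  refine ⟨K, Submodule.disjoint_def.2 fun x hx hxK => ?_,
    Submodule.codisjoint_iff_exists_add_eq.2 fun x => ?_⟩
  · have hann : inl x ∈ rAnn A I (Glue htri π) := (mem_rAnn_iff hI _).2 ⟨hx, rfl⟩
    exact congrArg Prod.fst (h.disjoint.le_bot ⟨hann, hxK⟩)
  · obtain ⟨u, v, hu, hv, huv⟩ :=
      Submodule.codisjoint_iff_exists_add_eq.1 h.codisjoint (inl x)
    obtain ⟨hu₁, hu₂⟩ := (mem_rAnn_iff hI u).1 hu
    have hv₂ : u.2 + v.2 = 0 := congrArg Prod.snd huv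
    rw [hu₂, zero_add] at hv₂
    refine ⟨u.1, v.1, hu₁, ?_, congrArg Prod.fst huv⟩
    show inl v.1 ∈ N''
    rwa [show inl v.1 = v from Prod.ext rfl hv₂.symm]

end Glue

end Glue

section Main

variable {A : Type} [Ring A] {I : Ideal A} {e : A}

lemma mul_mul_self_eq_of_coe_eq (hright : ∀ a ∈ I, ∀ b : A, a * b ∈ I) (he : e * e = e)
    (hI : (I : Set A) = {x : A | ∃ a : A, x = a * e}) (a : A) : e * a * e = e * a := by
  have he_mem : e ∈ (I : Set A) := hI ▸ ⟨1, (one_mul e).symm⟩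
  obtain ⟨c, hc⟩ : e * a ∈ {x : A | ∃ c : A, x = c * e} := hI ▸ hright e he_mem a
  rw [hc, mul_assoc, he]

lemma projective_of_forall_isCompl_rAnn {he : e * e = e} (htri : ∀ a : A, e * a * e = e * a)
    (hI : (I : Set A) = {x : A | ∃ a : A, x = a * e})
    (hcompl : ∀ (M : Type) [AddCommGroup M] [Module Aᵐᵒᵖ M], ∃ N' : Submodule Aᵐᵒᵖ M,
      IsCompl (rAnn A I M) N')
    {ι : Type} (N : Submodule (CornerRing A (1 - e) (one_sub_idem he))ᵐᵒᵖ
      (ι → CharacterModule (LTrap A e he))) :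
    Module.Projective (CornerRing A (1 - e) (one_sub_idem he))ᵐᵒᵖ N := by
  let π := Finsupp.linearCombination (CornerRing A (1 - e) (one_sub_idem he))ᵐᵒᵖ (id : N → N)
  obtain ⟨N'', hN''⟩ := hcompl (Glue htri (N.subtype ∘ₗ π))
  obtain ⟨K, hK⟩ := Glue.exists_isCompl_ker hI hN''
  rw [LinearMap.ker_comp_of_ker_eq_bot _ N.ker_subtype] at hK
  exact .of_isCompl_ker (fun n => ⟨Finsupp.single n 1, by simp [π]⟩) hK

end Main

/-- for a two-sided idempotent ideal `I` of `A` the following are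
equivalent:
(1) `ann_M(I)` is a direct summand of every right `A`-module and `I` is finitely
generated as a left ideal;
(2) there is an idempotent `e` with `I = Ae` such that, for `B := (1-e)A(1-e)` and the
left `B`-module `M := (1-e)Ae`, the character module `Hom_ℤ((1-e)Ae, ℚ/ℤ)` is hereditary
`Π`-projective as a right `B`-module. -/
theorem stmt_10 (I : Ideal A)
    (hright : ∀ a ∈ I, ∀ b : A, a * b ∈ I)
    (hidem : ∀ a ∈ I, a ∈ AddSubgroup.closure {x : A | ∃ b ∈ I, ∃ c ∈ I, x = b * c}) :
    ((∀ (M : Type) [AddCommGroup M] [Module Aᵐᵒᵖ M],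
        ∃ N' : Submodule Aᵐᵒᵖ M, rAnn A I M ⊓ N' = ⊥ ∧ rAnn A I M ⊔ N' = ⊤) ∧ I.FG)
    ↔
    (∃ (e : A) (he : e * e = e),
      (I : Set A) = {x : A | ∃ a : A, x = a * e} ∧
      ∀ (ι : Type)
        (N : Submodule (CornerRing A (1 - e) (one_sub_idem he))ᵐᵒᵖ
          (ι → CharacterModule (LTrap A e he))),
        Module.Projective (CornerRing A (1 - e) (one_sub_idem he))ᵐᵒᵖ N) := by
  constructor
  · rintro ⟨hsum, hfg⟩
    have hcompl : ∀ (M : Type) [AddCommGroup M] [Module Aᵐᵒᵖ M], ∃ N' : Submodule Aᵐᵒᵖ M,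
        IsCompl (rAnn A I M) N' := fun M _ _ => (hsum M).imp fun _ h => .of_eq h.1 h.2
    obtain ⟨e, he, hI⟩ := exists_idempotent_eq_mul_of_fg
      (fun x hx => exists_mul_eq_self_of_isCompl_rAnn hright hidem hcompl hx) hfg
    exact ⟨e, he, hI, fun ι N => projective_of_forall_isCompl_rAnn
      (mul_mul_self_eq_of_coe_eq hright he hI) hI hcompl N⟩
  · rintro ⟨e, he, hI, hproj⟩
    refine ⟨fun M _ _ => ?_, ⟨{e}, SetLike.ext' ?_⟩⟩
    · have := hproj (CharacterModule M) (LinearMap.range (toCharacters (M := M) he))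
      obtain ⟨K, hK⟩ := (toCharacters (M := M) he).exists_isCompl_ker_of_projective_range
      obtain ⟨N', hN'⟩ :=
        exists_isCompl_rAnn_of_isCompl_ker (mul_mul_self_eq_of_coe_eq hright he hI) hI hK
      exact ⟨N', hN'.inf_eq_bot, hN'.sup_eq_top⟩
    · ext x
      rw [Finset.coe_singleton, SetLike.mem_coe, Ideal.mem_span_singleton', hI]
      exact exists_congr fun a => eq_comm
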